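/- Under the assumptions below, the function t ↦ Complex.arg(1 − e^{πi/N}·(−f(t))^{1/N}) · t^{−1} is integrable on (0, λₙ) and ∫₀^{λₙ} Complex.arg(1 − e^{πi/N}(−f(t))^{1/N}) dt/t = − Σ_{k=1}^∞ (1/k) · sin(πk/N) · ∫₀^{λₙ} (−f(t))^{k/N} dt/t, the series on the right converging absolutely. -/

import Mathlib

/-!
For `|x| < 1`, the imaginary part of `-log (1 - z) = ∑ zᵏ/k` at `z = e^{iθ} x` gives
`arg (1 - e^{iθ} x) = -∑ sin (kθ) xᵏ / k`; apply this with `x = (-f t)^{1/N}`.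
On `(0, λₙ)` we have `f t = t P(t)` with `P` continuous, `P 0 = ∏ (-λᵢ) = -c < 0` and no zero of
`P`, so `0 < -f t ≤ m < 1` and `-f t ≤ C t`. Hence the `k`-th term divided by `t` is bounded by a
constant times `x₀ᵏ t^{1/N - 1}` with `x₀ = m^{1/N} < 1`, an integrable geometric majorant, and
dominated convergence integrates the series term by term.
-/

open MeasureTheory Real Set

theorem Complex.hasSum_arg_one_sub_exp_mul_I_mul {θ x : ℝ} (hx : |x| < 1) :
    HasSum (fun k : ℕ => -(1 / ((k : ℝ) + 1) * Real.sin (((k : ℝ) + 1) * θ) * x ^ (k + 1)))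
      (arg (1 - exp (θ * I) * x)) := by
  have hz : ‖exp (θ * I) * x‖ < 1 := by simpa [norm_exp_ofReal_mul_I] using hx
  have h := ((hasSum_taylorSeries_neg_log' hz).mapL imCLM).neg
  rw [imCLM_apply, neg_im, neg_neg, log_im] at h
  refine h.congr_fun fun k => ?_
  have hpow : (exp (θ * I) * x) ^ (k + 1) = exp (↑(((k : ℝ) + 1) * θ) * I) * ↑(x ^ (k + 1)) := by
    rw [mul_pow, ← exp_nat_mul]
    push_cast
    ring_nf
  have hden : ((k : ℂ) + 1) = ↑((k : ℝ) + 1) := by push_cast; rfl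
  rw [imCLM_apply, hpow, hden, div_ofReal_im, mul_im, exp_ofReal_mul_I_re,
    exp_ofReal_mul_I_im, ofReal_re, ofReal_im]
  ring

section
variable {α E : Type*} [MeasurableSpace α] {μ : Measure α} [NormedAddCommGroup E]
  {F : ℕ → α → E} {f : α → E} {g : α → ℝ} {r : ℝ}

theorem summable_norm_integral_of_norm_le_geometric_mul [NormedSpace ℝ E] (hr0 : 0 ≤ r)
    (hr1 : r < 1) (hg : Integrable g μ) (hFg : ∀ k, ∀ᵐ a ∂μ, ‖F k a‖ ≤ r ^ k * g a) :
    Summable fun k => ‖∫ a, F k a ∂μ‖ := by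
  refine .of_nonneg_of_le (fun k => norm_nonneg _) (fun k => ?_)
    ((summable_geometric_of_lt_one hr0 hr1).mul_right (∫ a, g a ∂μ))
  rw [← integral_const_mul]
  exact norm_integral_le_of_norm_le (hg.const_mul _) (hFg k)

theorem integrable_of_hasSum_of_norm_le_geometric_mul (hr0 : 0 ≤ r) (hr1 : r < 1)
    (hg : Integrable g μ) (hf : AEStronglyMeasurable f μ)
    (hFg : ∀ k, ∀ᵐ a ∂μ, ‖F k a‖ ≤ r ^ k * g a) (hFf : ∀ᵐ a ∂μ, HasSum (F · a) (f a)) :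
    Integrable f μ := by
  refine (hg.const_mul (1 - r)⁻¹).mono' hf ?_
  filter_upwards [hFf, ae_all_iff.2 hFg] with a hsum hbound
  refine (hsum.norm_le_of_bounded ((hasSum_geometric_of_lt_one hr0 hr1).mul_right (g a))
    hbound).trans_eq ?_
  ring

theorem hasSum_integral_of_norm_le_geometric_mul [NormedSpace ℝ E] (hr0 : 0 ≤ r)
    (hr1 : r < 1) (hg : Integrable g μ) (hF : ∀ k, AEStronglyMeasurable (F k) μ)
    (hFg : ∀ k, ∀ᵐ a ∂μ, ‖F k a‖ ≤ r ^ k * g a) (hFf : ∀ᵐ a ∂μ, HasSum (F · a) (f a)) :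
    HasSum (fun k => ∫ a, F k a ∂μ) (∫ a, f a ∂μ) := by
  refine hasSum_integral_of_dominated_convergence (fun k a => r ^ k * g a) hF hFg
    (ae_of_all _ fun a => (summable_geometric_of_lt_one hr0 hr1).mul_right (g a)) ?_ hFf
  simp_rw [tsum_mul_right, tsum_geometric_of_lt_one hr0 hr1]
  exact hg.const_mul _

end

section
variable {u : ℝ → ℝ} {a x₀ C s θ : ℝ}

theorem integral_arg_one_sub_exp_mul_div_eq_neg_tsum (hu : Measurable u) (ha : 0 < a)
    (hs : 0 < s) (hx₀ : x₀ < 1) (hu0 : ∀ t ∈ Ioo 0 a, 0 ≤ u t) (hux₀ : ∀ t ∈ Ioo 0 a, u t ≤ x₀)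
    (huC : ∀ t ∈ Ioo 0 a, u t ≤ C * t ^ s) :
    IntegrableOn (fun t => Complex.arg (1 - Complex.exp (θ * Complex.I) * u t) / t) (Ioo 0 a) ∧
    Summable (fun k : ℕ =>
      |1 / ((k : ℝ) + 1) * Real.sin (((k : ℝ) + 1) * θ) * ∫ t in Ioo 0 a, u t ^ (k + 1) / t|) ∧
    ∫ t in Ioo 0 a, Complex.arg (1 - Complex.exp (θ * Complex.I) * u t) / t =
      -∑' k : ℕ, 1 / ((k : ℝ) + 1) * Real.sin (((k : ℝ) + 1) * θ) *
        ∫ t in Ioo 0 a, u t ^ (k + 1) / t := by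
  set F : ℕ → ℝ → ℝ := fun k t => -(1 / ((k : ℝ) + 1) * Real.sin (((k : ℝ) + 1) * θ) *
    (u t ^ (k + 1) / t))
  have hmid : a / 2 ∈ Ioo 0 a := ⟨by linarith, by linarith⟩
  have hx₀0 : 0 ≤ x₀ := (hu0 _ hmid).trans (hux₀ _ hmid)
  have hg : IntegrableOn (fun t => C * t ^ (s - 1)) (Ioo 0 a) :=
    ((intervalIntegral.integrableOn_Ioo_rpow_iff ha).2 (by linarith)).const_mul C
  have hF : ∀ k, AEStronglyMeasurable (F k) (volume.restrict (Ioo 0 a)) := fun k =>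
    (by fun_prop : Measurable (F k)).aestronglyMeasurable
  have harg : AEStronglyMeasurable
      (fun t => Complex.arg (1 - Complex.exp (θ * Complex.I) * u t) / t)
      (volume.restrict (Ioo 0 a)) :=
    (by fun_prop : Measurable _).aestronglyMeasurable
  have hFg : ∀ k, ∀ᵐ t ∂volume.restrict (Ioo 0 a), ‖F k t‖ ≤ x₀ ^ k * (C * t ^ (s - 1)) := by
    intro k
    filter_upwards [ae_restrict_mem measurableSet_Ioo] with t ht
    have hcoef : |1 / ((k : ℝ) + 1) * Real.sin (((k : ℝ) + 1) * θ)| ≤ 1 := by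
      rw [abs_mul, abs_of_pos (by positivity)]
      exact mul_le_one₀ (div_le_one_of_le₀ (by linarith [k.cast_nonneg (α := ℝ)]) (by positivity))
        (abs_nonneg _) (abs_sin_le_one _)
    have hut := hu0 t ht
    have ht0 := ht.1
    calc ‖F k t‖
        = |1 / ((k : ℝ) + 1) * Real.sin (((k : ℝ) + 1) * θ)| * (u t ^ (k + 1) / t) := by
          rw [Real.norm_eq_abs, abs_neg, abs_mul,
            abs_of_nonneg (by positivity : 0 ≤ u t ^ (k + 1) / t)]
      _ ≤ u t ^ k * (u t / t) := by
          rw [pow_succ, mul_div_assoc]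
          exact mul_le_of_le_one_left (by positivity) hcoef
      _ ≤ x₀ ^ k * (C * t ^ s / t) := by
          gcongr
          exacts [hux₀ t ht, huC t ht]
      _ = x₀ ^ k * (C * t ^ (s - 1)) := by rw [rpow_sub_one ht0.ne', mul_div_assoc]
  have hFf : ∀ᵐ t ∂volume.restrict (Ioo 0 a),
      HasSum (F · t) (Complex.arg (1 - Complex.exp (θ * Complex.I) * u t) / t) := by
    filter_upwards [ae_restrict_mem measurableSet_Ioo] with t ht
    have hut : |u t| < 1 := abs_lt.2 ⟨by linarith [hu0 t ht], (hux₀ t ht).trans_lt hx₀⟩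
    refine ((Complex.hasSum_arg_one_sub_exp_mul_I_mul hut).div_const t).congr_fun fun k => ?_
    simp only [F]
    ring
  have hintF : ∀ k : ℕ, ∫ t in Ioo 0 a, F k t =
      -(1 / ((k : ℝ) + 1) * Real.sin (((k : ℝ) + 1) * θ) * ∫ t in Ioo 0 a, u t ^ (k + 1) / t) :=
    fun k => by
    simp only [F, integral_neg, integral_const_mul]
  refine ⟨integrable_of_hasSum_of_norm_le_geometric_mul hx₀0 hx₀ hg harg hFg hFf, ?_, ?_⟩
  · simpa only [hintF, norm_neg, Real.norm_eq_abs] using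
      summable_norm_integral_of_norm_le_geometric_mul hx₀0 hx₀ hg hFg
  · rw [← (hasSum_integral_of_norm_le_geometric_mul hx₀0 hx₀ hg hF hFg hFf).tsum_eq]
    simp only [hintF, tsum_neg]

end

theorem integral_arg_one_sub_exp_mul_rpow_div_eq_neg_tsum {g : ℝ → ℝ} {a m C N θ : ℝ}
    (hg : Measurable g) (ha : 0 < a) (hN : 0 < N) (hm : m < 1) (hg0 : ∀ t ∈ Ioo 0 a, 0 ≤ g t)
    (hgm : ∀ t ∈ Ioo 0 a, g t ≤ m) (hgC : ∀ t ∈ Ioo 0 a, g t ≤ C * t) :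
    IntegrableOn (fun t => Complex.arg (1 - Complex.exp (θ * Complex.I) *
      ((g t ^ (1 / N) : ℝ) : ℂ)) / t) (Ioo 0 a) ∧
    Summable (fun k : ℕ => |1 / ((k : ℝ) + 1) * Real.sin (((k : ℝ) + 1) * θ) *
      ∫ t in Ioo 0 a, g t ^ (((k : ℝ) + 1) / N) / t|) ∧
    ∫ t in Ioo 0 a, Complex.arg (1 - Complex.exp (θ * Complex.I) *
        ((g t ^ (1 / N) : ℝ) : ℂ)) / t =
      -∑' k : ℕ, 1 / ((k : ℝ) + 1) * Real.sin (((k : ℝ) + 1) * θ) *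
        ∫ t in Ioo 0 a, g t ^ (((k : ℝ) + 1) / N) / t := by
  have hmid : a / 2 ∈ Ioo 0 a := ⟨by linarith, by linarith⟩
  have hm0 : 0 ≤ m := (hg0 _ hmid).trans (hgm _ hmid)
  have hC0 : 0 ≤ C := nonneg_of_mul_nonneg_left ((hg0 _ hmid).trans (hgC _ hmid)) hmid.1
  have hN' : 0 < 1 / N := one_div_pos.2 hN
  have hpow : ∀ k : ℕ, ∫ t in Ioo 0 a, g t ^ (((k : ℝ) + 1) / N) / t =
      ∫ t in Ioo 0 a, (g t ^ (1 / N)) ^ (k + 1) / t := fun k =>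
    setIntegral_congr_fun measurableSet_Ioo fun t ht => by
      rw [← rpow_mul_natCast (hg0 t ht)]
      push_cast
      ring_nf
  simp only [hpow]
  exact integral_arg_one_sub_exp_mul_div_eq_neg_tsum (hg.pow_const _) ha hN'
    (rpow_lt_one hm0 hm hN') (fun t ht => rpow_nonneg (hg0 t ht) _)
    (fun t ht => rpow_le_rpow (hg0 t ht) (hgm t ht) hN'.le)
    (fun t ht => (rpow_le_rpow (hg0 t ht) (hgC t ht) hN'.le).trans_eq (mul_rpow hC0 ht.1.le))

theorem neg_of_continuousOn_of_ne_zero {P : ℝ → ℝ} {a : ℝ} (hP : ContinuousOn P (Ico 0 a))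
    (h0 : P 0 < 0) (hne : ∀ t ∈ Ioo 0 a, P t ≠ 0) : ∀ t ∈ Ioo 0 a, P t < 0 := by
  intro t ht
  by_contra! hge
  obtain ⟨s, hs, hPs⟩ := intermediate_value_Ioo ht.1.le
    (hP.mono (Icc_subset_Ico_right ht.2)) ⟨h0, hge.lt_of_ne (hne t ht).symm⟩
  exact hne s ⟨hs.1, hs.2.trans ht.2⟩ hPs

theorem IsCompact.exists_lt_forall_le {X : Type*} [TopologicalSpace X] {K : Set X}
    (hK : IsCompact K) (hne : K.Nonempty) {h : X → ℝ} (hh : ContinuousOn h K) {b : ℝ}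
    (hb : ∀ x ∈ K, h x < b) : ∃ m < b, ∀ x ∈ K, h x ≤ m := by
  obtain ⟨x₀, hx₀, hmax⟩ := hK.exists_isMaxOn hne hh
  exact ⟨h x₀, hb x₀ hx₀, fun x hx => hmax hx⟩

theorem Fin.prod_neg_eq_neg_of_eq_neg_one_pow_mul_prod {n : ℕ} (hn : 1 ≤ n) {lam : Fin n → ℂ}
    {c : ℂ} (hc : c = (-1) ^ (n - 1) * ∏ i, lam i) : ∏ i, -lam i = -c := by
  obtain ⟨n, rfl⟩ : ∃ m, n = m + 1 := ⟨n - 1, by omega⟩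
  rw [Finset.prod_neg, Finset.card_univ, Fintype.card_fin, hc, pow_succ, Nat.add_sub_cancel]
  ring

section
variable {ι : Type*} [Fintype ι] {lam : ι → ℂ} {f : ℝ → ℝ}

theorem eq_mul_re_prod_of_ofReal_eq (hf : ∀ t : ℝ, (f t : ℂ) = t * ∏ i, ((t : ℂ) - lam i))
    (t : ℝ) : f t = t * (∏ i, ((t : ℂ) - lam i)).re := by
  simpa using congrArg Complex.re (hf t)

theorem continuous_of_ofReal_eq_mul_prod
    (hf : ∀ t : ℝ, (f t : ℂ) = t * ∏ i, ((t : ℂ) - lam i)) : Continuous f := by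
  rw [funext (eq_mul_re_prod_of_ofReal_eq hf)]
  fun_prop

theorem exists_abs_le_mul_of_ofReal_eq_mul_prod
    (hf : ∀ t : ℝ, (f t : ℂ) = t * ∏ i, ((t : ℂ) - lam i)) (a : ℝ) :
    ∃ C, ∀ t ∈ Icc 0 a, |f t| ≤ C * t := by
  obtain ⟨C, hC⟩ := isCompact_Icc.exists_bound_of_continuousOn
    (f := fun t : ℝ => (∏ i, ((t : ℂ) - lam i)).re) (s := Icc 0 a) (by fun_prop)
  refine ⟨C, fun t ht => ?_⟩
  rw [eq_mul_re_prod_of_ofReal_eq hf, abs_mul, abs_of_nonneg ht.1, mul_comm]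
  exact mul_le_mul_of_nonneg_right (hC t ht) ht.1

theorem neg_pos_of_ofReal_eq_mul_prod (hf : ∀ t : ℝ, (f t : ℂ) = t * ∏ i, ((t : ℂ) - lam i))
    {a : ℝ} (hroots : ∀ i, ∀ r : ℝ, lam i = r → r ∉ Ioo 0 a) (h0 : (∏ i, -lam i).re < 0) :
    ∀ t ∈ Ioo 0 a, 0 < -f t := by
  have hfne : ∀ t ∈ Ioo 0 a, f t ≠ 0 := fun t ht hft => by
    have hprod : ∏ i, ((t : ℂ) - lam i) ≠ 0 :=
      Finset.prod_ne_zero_iff.2 fun i _ => sub_ne_zero.2 fun hi => hroots i t hi.symm ht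
    exact mul_ne_zero (Complex.ofReal_ne_zero.2 ht.1.ne') hprod (by rw [← hf, hft]; simp)
  have hP := neg_of_continuousOn_of_ne_zero (P := fun t : ℝ => (∏ i, ((t : ℂ) - lam i)).re)
    (a := a) (by fun_prop) (by simpa using h0)
    fun t ht hPt => hfne t ht (by rw [eq_mul_re_prod_of_ofReal_eq hf, hPt, mul_zero])
  intro t ht
  rw [eq_mul_re_prod_of_ofReal_eq hf, neg_mul_eq_mul_neg]
  exact mul_pos ht.1 (neg_pos.2 (hP t ht))

end

/-- Term-by-term logarithm expansion computing `Im(I₁ − I₂)` in the proof of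
Theorem 4.2: `t ↦ arg(1 − e^{πi/N}·(−f(t))^{1/N})/t` is integrable on `(0, λₙ)` and
`∫₀^{λₙ} arg(1 − e^{πi/N}(−f(t))^{1/N}) dt/t
  = −Σ_{k≥1} (1/k)·sin(πk/N)·∫₀^{λₙ} (−f(t))^{k/N} dt/t`,
the series converging absolutely. -/
theorem stmt8 (N n : ℕ) (hN : 2 ≤ N) (hn : 1 ≤ n)
    (lam : Fin n → ℂ) (f : ℝ → ℝ) (hf : ∀ t : ℝ, (f t : ℂ) = (t : ℂ) * ∏ i, ((t : ℂ) - lam i))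
    (ln : ℝ) (hlam : lam ⟨n - 1, by omega⟩ = (ln : ℂ)) (hln0 : 0 < ln) (hln1 : ln < 1)
    (hother : ∀ i : Fin n, i ≠ ⟨n - 1, by omega⟩ →
      ∀ r : ℝ, lam i = (r : ℂ) → ¬(0 < r ∧ r < 1))
    (hbound : ∀ t : ℝ, 0 ≤ t → t < 1 → |f t| < 1)
    (c : ℝ) (hc0 : 0 < c) (hc : (c : ℂ) = (-1 : ℂ) ^ (n - 1) * ∏ i, lam i) :
    IntegrableOn (fun t : ℝ =>
      Complex.arg (1 - Complex.exp (Real.pi * Complex.I / (N : ℂ)) *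
        (((-f t) ^ ((1 : ℝ) / (N : ℝ)) : ℝ) : ℂ)) / t) (Set.Ioo 0 ln) ∧
    Summable (fun k : ℕ =>
      |(1 / ((k : ℝ) + 1)) * Real.sin (Real.pi * ((k : ℝ) + 1) / (N : ℝ)) *
        ∫ t in Set.Ioo 0 ln, (-f t) ^ (((k : ℝ) + 1) / (N : ℝ)) / t|) ∧
    (∫ t in Set.Ioo 0 ln,
        Complex.arg (1 - Complex.exp (Real.pi * Complex.I / (N : ℂ)) *
          (((-f t) ^ ((1 : ℝ) / (N : ℝ)) : ℝ) : ℂ)) / t) =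
      -∑' k : ℕ,
        (1 / ((k : ℝ) + 1)) * Real.sin (Real.pi * ((k : ℝ) + 1) / (N : ℝ)) *
          ∫ t in Set.Ioo 0 ln, (-f t) ^ (((k : ℝ) + 1) / (N : ℝ)) / t := by
  have hroots : ∀ i, ∀ r : ℝ, lam i = r → r ∉ Ioo 0 ln := by
    intro i r hr hmem
    by_cases hi : i = ⟨n - 1, by omega⟩
    · rw [hi, hlam, Complex.ofReal_inj] at hr
      exact hmem.2.ne hr.symm
    · exact hother i hi r hr ⟨hmem.1, hmem.2.trans hln1⟩
  have h0 : (∏ i, -lam i).re < 0 := by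
    simpa [Fin.prod_neg_eq_neg_of_eq_neg_one_pow_mul_prod hn hc] using hc0
  have hpos := neg_pos_of_ofReal_eq_mul_prod hf hroots h0
  have hcont := continuous_of_ofReal_eq_mul_prod hf
  obtain ⟨m, hm1, hm⟩ := isCompact_Icc.exists_lt_forall_le (nonempty_Icc.2 hln0.le)
    hcont.abs.continuousOn fun t ht => hbound t ht.1 (ht.2.trans_lt hln1)
  obtain ⟨C, hC⟩ := exists_abs_le_mul_of_ofReal_eq_mul_prod hf ln
  have hθ : Complex.exp (π * Complex.I / N) = Complex.exp ((π / N : ℝ) * Complex.I) := by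
    push_cast
    ring_nf
  have hsin : ∀ k : ℕ, Real.sin (π * ((k : ℝ) + 1) / N) = Real.sin (((k : ℝ) + 1) * (π / N)) :=
    fun k => by ring_nf
  simp only [hθ, hsin]
  exact integral_arg_one_sub_exp_mul_rpow_div_eq_neg_tsum hcont.neg.measurable hln0
    (by positivity) hm1 (fun t ht => (hpos t ht).le)
    (fun t ht => (neg_le_abs _).trans (hm t (Ioo_subset_Icc_self ht)))
    (fun t ht => (neg_le_abs _).trans (hC t (Ioo_subset_Icc_self ht)))
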